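/- arXiv:1506.00329 — 2 statements merged into one kernel-verified Lean document; each statement's English description precedes it below -/
import Mathlib

section
/- Let L be a bounded distributive lattice, let Hom(L, 2) be the set of bounded-lattice homomorphisms L → 2 = {0,1}, and let e_L : L → 2^{Hom(L,2)} be the evaluation map e_L(a)(x) = x(a). Then the topological closure of e_L(L) in {0,1}^{Hom(L,2)} equals the set of all maps Hom(L,2) → {0,1} that preserve the pointwise order on Hom(L,2) and the bounds. -/
abbrev Xt (L : Type*) [DistribLattice L] [BoundedOrder L] :=
  {x : L → Bool // x ⊥ = ⊥ ∧ x ⊤ = ⊤ ∧ (∀ c d : L, x (c ⊓ d) = x c ⊓ x d) ∧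
    (∀ c d : L, x (c ⊔ d) = x c ⊔ x d)}

def toHom {L : Type*} [DistribLattice L] [BoundedOrder L] (x : Xt L) :
    BoundedLatticeHom L Bool where
  toFun := x.1
  map_sup' := x.2.2.2.2
  map_inf' := x.2.2.2.1
  map_top' := x.2.2.1
  map_bot' := x.2.1

lemma key {L : Type*} [DistribLattice L] [BoundedOrder L]
    (b : Xt L → Bool) (hb : ∀ x y : Xt L, (∀ a : L, x.1 a ≤ y.1 a) → b x ≤ b y)
    (I : Finset (Xt L)) : ∃ a : L, ∀ x ∈ I, x.1 a = b x := by
  classical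
  set T := I.filter (fun x => b x = true) with hT
  set F := I.filter (fun x => b x = false) with hF
  have hsep : ∀ x ∈ T, ∀ y ∈ F, ∃ c : L, x.1 c = true ∧ y.1 c = false := by
    intro x hx y hy
    by_contra h
    push_neg at h
    have hle : ∀ a : L, x.1 a ≤ y.1 a := by
      intro a
      rcases hxa : x.1 a with _ | _
      · simp
      · have := h a hxa
        simp [this]
    have := hb x y hle
    simp only [hT, hF, Finset.mem_filter] at hx hy
    rw [hx.2, hy.2] at this
    exact absurd this (by decide)
  let c : Xt L → Xt L → L := fun x y =>
    if h : ∃ c : L, x.1 c = true ∧ y.1 c = false then h.choose else ⊤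
  have hc : ∀ x ∈ T, ∀ y ∈ F, x.1 (c x y) = true ∧ y.1 (c x y) = false := by
    intro x hx y hy
    have h := hsep x hx y hy
    simp only [c, dif_pos h]
    exact h.choose_spec
  refine ⟨T.sup (fun x => F.inf (c x)), ?_⟩
  intro x hx
  rcases hbx : b x with _ | _
  · -- b x = false, x ∈ F
    have hxF : x ∈ F := Finset.mem_filter.2 ⟨hx, hbx⟩
    have : (toHom x) (T.sup fun z => F.inf (c z)) = T.sup fun z => (toHom x) (F.inf (c z)) := by
      rw [map_finset_sup]; rfl
    show (toHom x) _ = false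
    rw [this]
    refine le_antisymm ?_ (by simp)
    refine (Finset.sup_le ?_).trans_eq (by rfl)
    intro z hz
    have hmono : Monotone (toHom x) := OrderHomClass.mono _
    have : (toHom x) (F.inf (c z)) ≤ (toHom x) (c z x) :=
      hmono (Finset.inf_le hxF)
    refine this.trans ?_
    have := (hc z hz x hxF).2
    simp [toHom, this]
  · -- b x = true, x ∈ T
    have hxT : x ∈ T := Finset.mem_filter.2 ⟨hx, hbx⟩
    show (toHom x) _ = true
    have h1 : (toHom x) (F.inf (c x)) = true := by
      rw [map_finset_inf]
      refine le_antisymm (by simp) ?_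
      refine le_trans (by rfl) (Finset.le_inf ?_)
      intro z hz
      have := (hc x hxT z hz).1
      simp [toHom, this]
    have hmono : Monotone (toHom x) := OrderHomClass.mono _
    have h2 : (toHom x) (F.inf (c x)) ≤ (toHom x) (T.sup fun z => F.inf (c z)) :=
      hmono (Finset.le_sup (f := fun z => F.inf (c z)) hxT)
    rw [h1] at h2
    exact le_antisymm (by simp) h2

theorem stmt13 {L : Type*} [DistribLattice L] [BoundedOrder L] :
    closure (Set.range (fun (a : L)
        (x : {x : L → Bool // x ⊥ = ⊥ ∧ x ⊤ = ⊤ ∧ (∀ c d : L, x (c ⊓ d) = x c ⊓ x d) ∧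
          (∀ c d : L, x (c ⊔ d) = x c ⊔ x d)}) => x.1 a)) =
      {b : {x : L → Bool // x ⊥ = ⊥ ∧ x ⊤ = ⊤ ∧ (∀ c d : L, x (c ⊓ d) = x c ⊓ x d) ∧
          (∀ c d : L, x (c ⊔ d) = x c ⊔ x d)} → Bool |
        (∀ x y, (∀ a : L, x.1 a ≤ y.1 a) → b x ≤ b y) ∧
        (∀ x, (∀ a : L, x.1 a = ⊥) → b x = ⊥) ∧
        (∀ x, (∀ a : L, x.1 a = ⊤) → b x = ⊤)} := by
  apply Set.Subset.antisymm
  · -- closure ⊆ S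
    apply closure_minimal
    · rintro _ ⟨a, rfl⟩
      refine ⟨fun x y h => h a, ?_, ?_⟩
      · intro x hx
        have h1 := hx ⊤
        rw [x.2.2.1] at h1
        exact absurd h1 (by decide)
      · intro x hx
        have h1 := hx ⊥
        rw [x.2.1] at h1
        exact absurd h1 (by decide)
    · -- closed
      have hS : {b : Xt L → Bool |
          (∀ x y, (∀ a : L, x.1 a ≤ y.1 a) → b x ≤ b y) ∧
          (∀ x, (∀ a : L, x.1 a = ⊥) → b x = ⊥) ∧
          (∀ x, (∀ a : L, x.1 a = ⊤) → b x = ⊤)} =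
          ⋂ (x : Xt L) , ⋂ (y : Xt L), ⋂ (_ : ∀ a : L, x.1 a ≤ y.1 a),
            {b : Xt L → Bool | b x ≤ b y} := by
        ext b
        simp only [Set.mem_setOf_eq, Set.mem_iInter]
        constructor
        · exact fun h x y hxy => h.1 x y hxy
        · intro h
          refine ⟨fun x y hxy => h x y hxy, ?_, ?_⟩
          · intro x hx
            have h1 := hx ⊤
            rw [x.2.2.1] at h1
            exact absurd h1 (by decide)
          · intro x hx
            have h1 := hx ⊥
            rw [x.2.1] at h1
            exact absurd h1 (by decide)
      rw [hS]
      refine isClosed_iInter fun x => isClosed_iInter fun y => isClosed_iInter fun _ => ?_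
      have : {b : Xt L → Bool | b x ≤ b y} =
          (fun b : Xt L → Bool => (b x, b y)) ⁻¹' {p : Bool × Bool | p.1 ≤ p.2} := rfl
      rw [this]
      exact (isClosed_discrete _).preimage ((continuous_apply x).prodMk (continuous_apply y))
  · rintro b ⟨hb, -, -⟩
    rw [mem_closure_iff]
    intro U hU hbU
    obtain ⟨I, u, hu, hsub⟩ := isOpen_pi_iff.1 hU b hbU
    obtain ⟨a, ha⟩ := key b hb I
    refine ⟨fun x => x.1 a, hsub ?_, ⟨a, rfl⟩⟩
    intro x hx
    show x.1 a ∈ u x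
    rw [ha x (Finset.mem_coe.1 hx)]
    exact (hu x (Finset.mem_coe.1 hx)).2
end

section
/- Let B be a closed submonoid of M^I for a finite discrete topological monoid M and index set I (so B is a compact zero-dimensional topological monoid in the topological prevariety generated by M). Then there is a continuous monoid homomorphism γ : N(B♭) → B with γ ∘ e_{B♭} = id_B, where B♭ is B without its topology and N(B♭) ⊆ M^{Hom(B♭,M)} is the closure of the image of the evaluation map e_{B♭}. Concretely, γ is obtained by restricting the projection M^{Hom(B♭,M)} → M^{Hom_c(B,M)} along continuous homomorphisms and inverting the resulting embedding of B. -/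
theorem stmt19 {M I : Type*} [Monoid M] [Finite M] [TopologicalSpace M] [DiscreteTopology M]
    (S : Submonoid (I → M)) (hS : IsClosed (S : Set (I → M))) :
    let e : ↥S → ((↥S →* M) → M) := fun b x => x b
    ∃ γ : {f : (↥S →* M) → M // f ∈ closure (Set.range e)} → ↥S,
      Continuous γ ∧
      (∀ f g : {f : (↥S →* M) → M // f ∈ closure (Set.range e)},
        ∀ hfg : f.1 * g.1 ∈ closure (Set.range e), γ ⟨f.1 * g.1, hfg⟩ = γ f * γ g) ∧
      ∀ b : ↥S, γ ⟨e b, subset_closure ⟨b, rfl⟩⟩ = b := by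
  intro e
  set π : I → (↥S →* M) := fun i => (Pi.evalMonoidHom (fun _ : I => M) i).comp S.subtype
    with hπ
  have hΦcont : Continuous (fun f : (↥S →* M) → M => fun i : I => f (π i)) := by
    apply continuous_pi
    intro i
    exact continuous_apply _
  have hmaps : Set.MapsTo (fun f : (↥S →* M) → M => fun i : I => f (π i))
      (Set.range e) (S : Set (I → M)) := by
    rintro _ ⟨b, rfl⟩
    simp only [e, hπ]
    exact b.2
  have hmem : ∀ f : {f : (↥S →* M) → M // f ∈ closure (Set.range e)},
      (fun i => f.1 (π i)) ∈ S := by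
    intro f
    have h := map_mem_closure hΦcont f.2 hmaps
    rwa [hS.closure_eq] at h
  refine ⟨fun f => ⟨fun i => f.1 (π i), hmem f⟩, ?_, ?_, ?_⟩
  · exact Continuous.subtype_mk (hΦcont.comp continuous_subtype_val) _
  · intro f g hfg
    ext i
    rfl
  · intro b
    ext i
    rfl
end
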